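/- arXiv:1401.2052 — 2 statements merged into one kernel-verified Lean document; each statement's English description precedes it below -/
import Mathlib

section
/- Let R be a commutative ring. All Pierce stalks of R are projective free rings if and only if for every finitely generated projective R-module P there is a complete orthogonal set of idempotents e₁, …, e_k in R (depending on P) such that for each i the module P/(1−e_i)P is a free module over the ring R/(1−e_i), where (1−e_i) denotes the principal ideal generated by 1−e_i. -/
/-- A complete orthogonal set of idempotents: finitely many idempotents, pairwise orthogonal,
summing to `1`. -/
def IsCompleteOrthogonalIdempotents {R : Type*} [CommRing R] {k : ℕ} (e : Fin k → R) : Prop :=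
  (∀ i, IsIdempotentElem (e i)) ∧ (∀ i j, i ≠ j → e i * e j = 0) ∧ ∑ i, e i = 1

/-- The ideal of `R` generated by the idempotents of `R` lying in `p`; the Pierce stalk of `R`
at the prime `p` is `R ⧸ pierceIdeal p`. -/
def pierceIdeal {R : Type*} [CommRing R] (p : Ideal R) : Ideal R :=
  Ideal.span {e : R | IsIdempotentElem e ∧ e ∈ p}

universe u

/-- A commutative ring is *projective free* if every finitely generated projective module over
it is free. -/
def IsProjectiveFree (S : Type u) [CommRing S] : Prop :=
  ∀ (M : Type u) [AddCommGroup M] [Module S M],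
    Module.Finite S M → Module.Projective S M → Module.Free S M

/-!
A finitely generated projective module is the image of an idempotent matrix `A`, and it is free
over a ring `S` exactly when `A = U V` over `S` with `V U = 1`. The ideal `pierceIdeal 𝔭` is the
directed union of the ideals `(e)` with `e ∈ 𝔭` idempotent, and `R ⧸ (e) ≅ (1 - e) R` is a direct
factor of `R`. So the finitely many matrix identities expressing freeness over the Pierce stalk
already hold over some `R ⧸ (e)`, and idempotent matrices over the stalk lift to `R`.

If all stalks are projective free, every prime `𝔭` thus contains an idempotent `e` with `P ⧸ e P`
free; finitely many of the complements `1 - e` generate the unit ideal, and making them orthogonal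
gives the decomposition. Conversely, a projective module over the stalk at `𝔭` lifts to `R`, and
for one of the given idempotents `1 - eᵢ ∈ 𝔭`, so `(1 - eᵢ) ≤ pierceIdeal 𝔭` and freeness over
`R ⧸ (1 - eᵢ)` passes to the stalk.
-/

open TensorProduct

theorem isIdempotentElem_prod {ι M : Type*} [CommMonoid M] {s : Finset ι} {f : ι → M}
    (hf : ∀ i ∈ s, IsIdempotentElem (f i)) : IsIdempotentElem (∏ i ∈ s, f i) :=
  Finset.prod_induction _ _ (fun _ _ ha hb => ha.mul hb) .one hf

section Idempotents

variable {R : Type*} [CommRing R]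

theorem isCompleteOrthogonalIdempotents_iff {k : ℕ} {e : Fin k → R} :
    IsCompleteOrthogonalIdempotents e ↔ CompleteOrthogonalIdempotents e :=
  ⟨fun ⟨hidem, hortho, hsum⟩ => ⟨⟨hidem, fun i j hij => hortho i j hij⟩, hsum⟩,
    fun he => ⟨he.idem, fun _ _ hij => he.ortho hij, he.complete⟩⟩

theorem CompleteOrthogonalIdempotents.exists_one_sub_mem {ι : Type*} [Fintype ι] {e : ι → R}
    (he : CompleteOrthogonalIdempotents e) (p : Ideal R) [p.IsPrime] : ∃ i, 1 - e i ∈ p := by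
  obtain ⟨i, -, hi⟩ := Ideal.IsPrime.prod_mem_iff.1 (he.prod_one_sub ▸ p.zero_mem)
  exact ⟨i, hi⟩

theorem completeOrthogonalIdempotents_one_sub_mul_prod {ι : Type*} [Fintype ι] [LinearOrder ι]
    {e : ι → R} (he : ∀ i, IsIdempotentElem (e i)) (h : ∏ i, e i = 0) :
    CompleteOrthogonalIdempotents fun j => (1 - e j) * ∏ i ∈ Finset.univ with i < j, e i := by
  refine ⟨⟨fun j => (he j).one_sub.mul (isIdempotentElem_prod fun i _ => he i), ?_⟩, ?_⟩
  · intro i j hij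
    wlog hlt : i < j generalizing i j
    · exact mul_comm (_ : R) _ ▸ this hij.symm (hij.lt_or_gt.resolve_left hlt)
    rw [← Finset.mul_prod_erase (Finset.univ.filter (· < j)) e (by simpa using hlt)]
    linear_combination ((∏ l ∈ Finset.univ with l < i, e l) * (1 - e j) *
      ∏ l ∈ (Finset.univ.filter (· < j)).erase i, e l) * (he i).mul_one_sub_self
  · have := Finset.prod_one_sub_ordered Finset.univ (1 - e ·)
    simp only [sub_sub_cancel, h] at this
    exact (sub_eq_zero.1 this.symm).symm

theorem exists_prod_eq_zero_of_forall_isPrime {Φ : R → Prop}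
    (h : ∀ p : Ideal R, p.IsPrime → ∃ e, IsIdempotentElem e ∧ e ∈ p ∧ Φ e) :
    ∃ (k : ℕ) (e : Fin k → R), (∀ i, IsIdempotentElem (e i) ∧ Φ (e i)) ∧ ∏ i, e i = 0 := by
  set T := {e : R | IsIdempotentElem e ∧ Φ e}
  have hspan : (1 : R) ∈ Ideal.span ((1 - ·) '' T) := by
    rw [← Ideal.eq_top_iff_one]
    by_contra hne
    obtain ⟨m, hm, hle⟩ := Ideal.exists_le_maximal _ hne
    obtain ⟨e, he, hem, hΦ⟩ := h m hm.isPrime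
    have h1 : 1 - e ∈ m := hle (Ideal.subset_span ⟨e, ⟨he, hΦ⟩, rfl⟩)
    exact hm.ne_top ((Ideal.eq_top_iff_one _).2 (by simpa using m.add_mem h1 hem))
  obtain ⟨k, c, s, hs⟩ := Submodule.mem_span_set'.1 hspan
  choose e he hes using fun i => (s i).2
  refine ⟨k, e, he, ?_⟩
  calc ∏ i, e i = (∑ i, c i • (s i : R)) * ∏ i, e i := by rw [hs, one_mul]
    _ = 0 := by
      rw [Finset.sum_mul]
      refine Finset.sum_eq_zero fun i _ => ?_
      rw [← hes i, smul_eq_mul, mul_assoc, ← Finset.mul_prod_erase _ _ (Finset.mem_univ i),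
        ← mul_assoc (1 - e i), (he i).1.one_sub_mul_self, zero_mul, mul_zero]

end Idempotents

section Pierce

variable {R : Type*} [CommRing R]

theorem exists_isIdempotentElem_mem_forall_mem_span {ι : Type*} [Fintype ι] {p : Ideal R}
    {e : ι → R} (he : ∀ i, IsIdempotentElem (e i)) (hp : ∀ i, e i ∈ p) :
    ∃ g, IsIdempotentElem g ∧ g ∈ p ∧ ∀ i, e i ∈ Ideal.span {g} := by
  classical
  have hprod : IsIdempotentElem (∏ i, (1 - e i)) := isIdempotentElem_prod fun i _ => (he i).one_sub
  -- the join of the `e i` in the Boolean algebra of idempotents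
  refine ⟨1 - ∏ i, (1 - e i), hprod.one_sub, ?_, fun i => ?_⟩
  · rw [← Ideal.Quotient.eq_zero_iff_mem]
    simp [Ideal.Quotient.eq_zero_iff_mem.2 (hp _)]
  · rw [← hprod.one_sub.ker_toSpanSingleton_one_sub_eq_span, LinearMap.mem_ker,
      LinearMap.toSpanSingleton_apply, sub_sub_cancel, smul_eq_mul,
      ← Finset.mul_prod_erase _ _ (Finset.mem_univ i), ← mul_assoc, (he i).mul_one_sub_self,
      zero_mul]

theorem mem_pierceIdeal_iff {p : Ideal R} {x : R} :
    x ∈ pierceIdeal p ↔ ∃ e, IsIdempotentElem e ∧ e ∈ p ∧ x ∈ Ideal.span {e} := by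
  constructor
  · intro hx
    obtain ⟨k, c, s, rfl⟩ := Submodule.mem_span_set'.1 hx
    obtain ⟨g, hg, hgp, hs⟩ := exists_isIdempotentElem_mem_forall_mem_span
      (fun i => (s i).2.1) (fun i => (s i).2.2)
    exact ⟨g, hg, hgp, Ideal.sum_mem _ fun i _ => Ideal.mul_mem_left _ _ (hs i)⟩
  · rintro ⟨e, he, hep, hx⟩
    have he' : e ∈ pierceIdeal p := Ideal.subset_span ⟨he, hep⟩
    exact (Ideal.span_singleton_le_iff_mem _).2 he' hx

theorem exists_isIdempotentElem_mem_forall_mem_span_of_mem_pierceIdeal {ι : Type*} [Finite ι]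
    {p : Ideal R} {x : ι → R} (hx : ∀ i, x i ∈ pierceIdeal p) :
    ∃ e, IsIdempotentElem e ∧ e ∈ p ∧ ∀ i, x i ∈ Ideal.span {e} := by
  have := Fintype.ofFinite ι
  choose e he hep hxe using fun i => mem_pierceIdeal_iff.1 (hx i)
  obtain ⟨g, hg, hgp, heg⟩ := exists_isIdempotentElem_mem_forall_mem_span he hep
  exact ⟨g, hg, hgp, fun i => Ideal.span_singleton_le_iff_mem _ |>.2 (heg i) (hxe i)⟩

end Pierce

namespace Matrix

theorem map_surjective {m n α β : Type*} {f : α → β} (hf : Function.Surjective f) :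
    Function.Surjective fun M : Matrix m n α => M.map f :=
  fun M => ⟨M.map (Function.surjInv hf), by ext; simp [Function.surjInv_eq hf]⟩

section Retract

variable {S : Type*} [CommRing S] {n : ℕ}

def CutsOut (A : Matrix (Fin n) (Fin n) S) (Q : Type*) [AddCommGroup Q] [Module S Q] : Prop :=
  ∃ (ι : Q →ₗ[S] Fin n → S) (ρ : (Fin n → S) →ₗ[S] Q),
    ρ ∘ₗ ι = LinearMap.id ∧ ι ∘ₗ ρ = Matrix.toLin' A

/-- For idempotent `A`: its image is free, identified with `Fin a → S` by `U` and `V`. -/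
def HasFreeRange (A : Matrix (Fin n) (Fin n) S) : Prop :=
  ∃ (a : ℕ) (U : Matrix (Fin n) (Fin a) S) (V : Matrix (Fin a) (Fin n) S), V * U = 1 ∧ U * V = A

theorem HasFreeRange.map {T : Type*} [CommRing T] {A : Matrix (Fin n) (Fin n) S}
    (h : A.HasFreeRange) (f : S →+* T) : (A.map f).HasFreeRange := by
  obtain ⟨a, U, V, hVU, hUV⟩ := h
  refine ⟨a, U.map f, V.map f, ?_, by rw [← Matrix.map_mul, hUV]⟩
  rw [← Matrix.map_mul, hVU, Matrix.map_one _ (map_zero f) (map_one f)]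

variable {Q : Type*} [AddCommGroup Q] [Module S Q] {A : Matrix (Fin n) (Fin n) S}

variable (S Q) in
theorem exists_cutsOut [Module.Finite S Q] [Module.Projective S Q] :
    ∃ (n : ℕ) (A : Matrix (Fin n) (Fin n) S), A.CutsOut Q := by
  obtain ⟨n, ρ, ι, -, -, hρι⟩ := Module.Finite.exists_comp_eq_id_of_projective S Q
  exact ⟨n, LinearMap.toMatrix' (ι ∘ₗ ρ), ι, ρ, hρι, (Matrix.toLin'_toMatrix' _).symm⟩

theorem CutsOut.isIdempotentElem (h : A.CutsOut Q) : IsIdempotentElem A := by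
  obtain ⟨ι, ρ, hρι, hA⟩ := h
  apply Matrix.toLin'.injective
  rw [Matrix.toLin'_mul, ← hA, LinearMap.comp_assoc, ← LinearMap.comp_assoc ρ ι ρ, hρι,
    LinearMap.id_comp]

theorem cutsOut_range (hA : IsIdempotentElem A) :
    A.CutsOut (LinearMap.range (Matrix.toLin' A)) := by
  refine ⟨Submodule.subtype _, (Matrix.toLin' A).rangeRestrict, ?_, rfl⟩
  ext ⟨_, y, rfl⟩ : 1
  exact Subtype.ext (by simp [hA.eq])

theorem CutsOut.finite (h : A.CutsOut Q) : Module.Finite S Q := by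
  obtain ⟨ι, ρ, hρι, -⟩ := h
  exact Module.Finite.of_surjective ρ (LinearMap.surjective_of_comp_eq_id ι ρ hρι)

theorem CutsOut.projective (h : A.CutsOut Q) : Module.Projective S Q := by
  obtain ⟨ι, ρ, hρι, -⟩ := h
  exact Module.Projective.of_split ι ρ hρι

variable (S) in
theorem CutsOut.baseChange {R : Type*} [CommRing R] [Algebra R S] {P : Type*} [AddCommGroup P]
    [Module R P] {A : Matrix (Fin n) (Fin n) R} (h : A.CutsOut P) :
    (A.map (algebraMap R S)).CutsOut (S ⊗[R] P) := by
  obtain ⟨ι, ρ, hρι, hA⟩ := h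
  let ε := (Algebra.TensorProduct.basis S (Pi.basisFun R (Fin n))).equivFun
  refine ⟨ε.toLinearMap ∘ₗ ι.baseChange S, ρ.baseChange S ∘ₗ ε.symm.toLinearMap, ?_, ?_⟩
  · have hρι' : ∀ x, ρ (ι x) = x := LinearMap.congr_fun hρι
    ext x
    simp [hρι']
  · apply LinearMap.toMatrix'.injective
    let b := Algebra.TensorProduct.basis S (Pi.basisFun R (Fin n))
    change LinearMap.toMatrix b b (ι.baseChange S ∘ₗ ρ.baseChange S) = _
    rw [← LinearMap.baseChange_comp, LinearMap.toMatrix_baseChange, LinearMap.toMatrix_eq_toMatrix',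
      hA, LinearMap.toMatrix'_toLin', LinearMap.toMatrix'_toLin']

theorem CutsOut.free_iff (h : A.CutsOut Q) : Module.Free S Q ↔ A.HasFreeRange := by
  have := h.finite
  obtain ⟨ι, ρ, hρι, hA⟩ := h
  have hρι' : ∀ x, ρ (ι x) = x := LinearMap.congr_fun hρι
  have hιρ : ∀ y, ι (ρ y) = A *ᵥ y := fun y => by rw [← Matrix.toLin'_apply, ← hA]; rfl
  constructor
  · intro _
    let w := ((Module.Free.chooseBasis S Q).reindex (Fintype.equivFin _)).equivFun
    refine ⟨_, LinearMap.toMatrix' (ι ∘ₗ w.symm.toLinearMap),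
      LinearMap.toMatrix' (w.toLinearMap ∘ₗ ρ), ?_, ?_⟩
    · rw [← LinearMap.toMatrix'_comp, ← LinearMap.toMatrix'_id]
      exact congrArg _ (LinearMap.ext fun x => by simp [hρι'])
    · rw [← LinearMap.toMatrix'_comp, ← LinearMap.toMatrix'_toLin' A, ← hA]
      exact congrArg _ (LinearMap.ext fun x => by simp)
  · rintro ⟨a, U, V, hVU, hUV⟩
    refine Module.Free.of_equiv
      (LinearEquiv.ofLinearMap (Matrix.toLin' V ∘ₗ ι) (ρ ∘ₗ Matrix.toLin' U) ?_ ?_).symm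
    · refine LinearMap.ext fun y => ?_
      simp [hιρ, Matrix.mulVec_mulVec, ← hUV, ← Matrix.mul_assoc, hVU]
    · refine LinearMap.ext fun x => ?_
      simp [Matrix.mulVec_mulVec, hUV, ← hιρ, hρι']

end Retract

section Quotient

variable {R : Type*} [CommRing R] {n : ℕ}

theorem map_mk_eq_map_mk_iff {l m : Type*} {J : Ideal R} {B C : Matrix l m R} :
    B.map (Ideal.Quotient.mk J) = C.map (Ideal.Quotient.mk J) ↔ ∀ i j, B i j - C i j ∈ J := by
  simp [← Matrix.ext_iff, Ideal.Quotient.mk_eq_mk_iff_sub_mem]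

theorem HasFreeRange.map_mk_of_le {J₁ J₂ : Ideal R} {A : Matrix (Fin n) (Fin n) R}
    (h : (A.map (Ideal.Quotient.mk J₁)).HasFreeRange) (hJ : J₁ ≤ J₂) :
    (A.map (Ideal.Quotient.mk J₂)).HasFreeRange := by
  simpa [Matrix.map_map, ← RingHom.coe_comp, Ideal.Quotient.factor_comp_mk] using
    h.map (Ideal.Quotient.factor hJ)

theorem CutsOut.free_quotient_iff {P : Type*} [AddCommGroup P] [Module R P]
    {A : Matrix (Fin n) (Fin n) R} (h : A.CutsOut P) (J : Ideal R) :
    Module.Free (R ⧸ J) (P ⧸ (J • ⊤ : Submodule R P)) ↔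
      (A.map (Ideal.Quotient.mk J)).HasFreeRange := by
  have hsurj : Function.Surjective (algebraMap R (R ⧸ J)) := Ideal.Quotient.mk_surjective
  rw [← Module.Free.iff_of_equiv
    ((TensorProduct.quotTensorEquivQuotSMul P J).extendScalarsOfSurjective hsurj),
    (h.baseChange (R ⧸ J)).free_iff]
  rfl

variable {p : Ideal R}

theorem HasFreeRange.exists_isIdempotentElem_of_pierceIdeal {A : Matrix (Fin n) (Fin n) R}
    (h : (A.map (Ideal.Quotient.mk (pierceIdeal p))).HasFreeRange) :
    ∃ e, IsIdempotentElem e ∧ e ∈ p ∧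
      (A.map (Ideal.Quotient.mk (Ideal.span {e}))).HasFreeRange := by
  obtain ⟨a, U, V, hVU, hUV⟩ := h
  obtain ⟨U, rfl⟩ := map_surjective Ideal.Quotient.mk_surjective U
  obtain ⟨V, rfl⟩ := map_surjective Ideal.Quotient.mk_surjective V
  let mk₁ := Ideal.Quotient.mk (pierceIdeal p)
  rw [← Matrix.map_mul, ← Matrix.map_one mk₁ (map_zero mk₁) (map_one mk₁),
    map_mk_eq_map_mk_iff] at hVU
  rw [← Matrix.map_mul, map_mk_eq_map_mk_iff] at hUV
  obtain ⟨e, he, hep, hspan⟩ := exists_isIdempotentElem_mem_forall_mem_span_of_mem_pierceIdeal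
    (x := Sum.elim (fun ij : Fin a × Fin a => (V * U) ij.1 ij.2 - (1 : Matrix _ _ R) ij.1 ij.2)
      (fun ij : Fin n × Fin n => (U * V) ij.1 ij.2 - A ij.1 ij.2))
    (by rintro (⟨i, j⟩ | ⟨i, j⟩); exacts [hVU i j, hUV i j])
  let mk := Ideal.Quotient.mk (Ideal.span {e})
  refine ⟨e, he, hep, a, U.map mk, V.map mk, ?_, ?_⟩
  · rw [← Matrix.map_mul, ← Matrix.map_one mk (map_zero mk) (map_one mk), map_mk_eq_map_mk_iff]
    exact fun i j => hspan (.inl (i, j))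
  · rw [← Matrix.map_mul, map_mk_eq_map_mk_iff]
    exact fun i j => hspan (.inr (i, j))

theorem exists_isIdempotentElem_map_eq_of_pierceIdeal
    {A : Matrix (Fin n) (Fin n) (R ⧸ pierceIdeal p)} (hA : IsIdempotentElem A) :
    ∃ C : Matrix (Fin n) (Fin n) R, IsIdempotentElem C ∧ C.map (Ideal.Quotient.mk _) = A := by
  obtain ⟨B, rfl⟩ := map_surjective Ideal.Quotient.mk_surjective A
  rw [IsIdempotentElem, ← Matrix.map_mul, map_mk_eq_map_mk_iff] at hA
  obtain ⟨e, he, hep, hspan⟩ := exists_isIdempotentElem_mem_forall_mem_span_of_mem_pierceIdeal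
    (x := fun ij : Fin n × Fin n => (B * B) ij.1 ij.2 - B ij.1 ij.2) (fun ij => hA ij.1 ij.2)
  have hB : (1 - e) • (B * B) = (1 - e) • B := by
    ext i j
    have := hspan (i, j)
    rw [← he.ker_toSpanSingleton_one_sub_eq_span, LinearMap.mem_ker,
      LinearMap.toSpanSingleton_apply, smul_eq_mul] at this
    simp only [Matrix.smul_apply, smul_eq_mul]
    linear_combination this
  refine ⟨(1 - e) • B, ?_, ?_⟩
  · rw [IsIdempotentElem, Matrix.smul_mul, Matrix.mul_smul, smul_smul, he.one_sub.eq, hB]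
  · have : Ideal.Quotient.mk (pierceIdeal p) e = 0 := Ideal.Quotient.eq_zero_iff_mem.2
      (mem_pierceIdeal_iff.2 ⟨e, he, hep, Ideal.mem_span_singleton_self e⟩)
    ext i j
    simp [this]

end Quotient

end Matrix

/-- All Pierce stalks of a commutative ring `R` are projective free iff for every finitely
generated projective `R`-module `P` there is a complete orthogonal set of idempotents
`e₁, …, e_k` such that each `P/(1-eᵢ)P` is free over `R/(1-eᵢ)`. -/
theorem pierceStalks_projectiveFree_iff {R : Type u} [CommRing R] :
    (∀ p : Ideal R, p.IsPrime → IsProjectiveFree (R ⧸ pierceIdeal p)) ↔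
      ∀ (P : Type u) [AddCommGroup P] [Module R P], Module.Finite R P → Module.Projective R P →
        ∃ (k : ℕ) (e : Fin k → R), IsCompleteOrthogonalIdempotents e ∧
          ∀ i, Module.Free (R ⧸ Ideal.span {1 - e i})
            (P ⧸ ((Ideal.span {1 - e i}) • ⊤ : Submodule R P)) := by
  constructor
  · intro H P _ _ _ _
    obtain ⟨n, A, hA⟩ := Matrix.exists_cutsOut R P
    have hlocal (p : Ideal R) (hp : p.IsPrime) : ∃ e, IsIdempotentElem e ∧ e ∈ p ∧
        (A.map (Ideal.Quotient.mk (Ideal.span {e}))).HasFreeRange := by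
      have hS := hA.baseChange (R ⧸ pierceIdeal p)
      have hfree := H p hp _ hS.finite hS.projective
      exact (hS.free_iff.1 hfree).exists_isIdempotentElem_of_pierceIdeal
    obtain ⟨k, e, he, hprod⟩ := exists_prod_eq_zero_of_forall_isPrime hlocal
    refine ⟨k, _, isCompleteOrthogonalIdempotents_iff.2
      (completeOrthogonalIdempotents_one_sub_mul_prod (fun i => (he i).1) hprod), fun j => ?_⟩
    refine (hA.free_quotient_iff _).2 ((he j).2.map_mk_of_le ?_)
    refine Ideal.span_singleton_le_span_singleton.2 ⟨e j, ?_⟩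
    linear_combination (-∏ i ∈ Finset.univ with i < j, e i) * (he j).1.eq
  · intro H p hp M _ _ _ _
    obtain ⟨n, A, hA⟩ := Matrix.exists_cutsOut (R ⧸ pierceIdeal p) M
    obtain ⟨C, hC, rfl⟩ := Matrix.exists_isIdempotentElem_map_eq_of_pierceIdeal hA.isIdempotentElem
    have hN := Matrix.cutsOut_range hC
    obtain ⟨k, e, he, hfree⟩ := H _ hN.finite hN.projective
    obtain ⟨i, hi⟩ := (isCompleteOrthogonalIdempotents_iff.1 he).exists_one_sub_mem p
    have hle : Ideal.span {1 - e i} ≤ pierceIdeal p := (Ideal.span_singleton_le_iff_mem _).2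
      (mem_pierceIdeal_iff.2 ⟨_, (he.1 i).one_sub, hi, Ideal.mem_span_singleton_self _⟩)
    exact hA.free_iff.2 (((hN.free_quotient_iff _).1 (hfree i)).map_mk_of_le hle)
end

section
/- Let R be a commutative J-clean ring. The following are equivalent: (1) the matrix ring M₂(R) is strongly clean, i.e., every element of M₂(R) is strongly clean; (2) for every a in the Jacobson radical J(R) the polynomial t² − t + a has a root in R, i.e., there exists r ∈ R with r² − r + a = 0. -/
/-- An element of a ring is *strongly clean* if it is the sum of an idempotent and a unit
that commute with each other. -/
def IsStronglyClean {S : Type*} [Ring S] (a : S) : Prop :=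
  ∃ e u : S, IsIdempotentElem e ∧ IsUnit u ∧ a = e + u ∧ e * u = u * e

/-- A commutative ring is *J-clean* if for every `r` there is an idempotent `e` with
`r e + (1 - e)` a unit and `r (1 - e)` in the Jacobson radical. -/
def IsJCleanRing (R : Type*) [CommRing R] : Prop :=
  ∀ r : R, ∃ e : R, IsIdempotentElem e ∧ IsUnit (r * e + (1 - e)) ∧
    r * (1 - e) ∈ Ideal.jacobson (⊥ : Ideal R)

/-!
In a J-clean ring every element splits, along an idempotent `e`, into a part where it is a unit
and a part lying in `J(R)`, and strong cleanness glues along such scalar idempotents. Splitting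
first on `det A` and then on `det (A - 1)` leaves three cases: `A` is a unit, `A - 1` is a unit,
or `det A, det (A - 1) ∈ J(R)`. In the last case `tr A` is a unit, and a root `w ∈ J(R)` of
`t² - t + det A / (tr A)²` gives eigenvalues `tr A * w ∈ J(R)` and `tr A * (1 - w)`, a unit; the
spectral idempotent of the first one is the idempotent part of `A`.

Conversely, if the companion matrix `C` of `t² - t + a`, `a ∈ J(R)`, is `E + U`, then `det E` and
`det (1 - E)` are idempotents in `a R ⊆ J(R)`, hence zero. So `E` has rank one, `C` acts on its
image by the scalar `tr (C E)`, and this scalar is a root.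
-/

section

open Matrix

variable {R : Type*} [CommRing R]

theorem Ideal.isUnit_one_sub_of_mem_jacobson_bot {x : R} (hx : x ∈ Ideal.jacobson ⊥) :
    IsUnit (1 - x) :=
  Ideal.isUnit_of_sub_one_mem_jacobson_bot _ (by simpa using neg_mem hx)

theorem IsIdempotentElem.eq_zero_of_mem_jacobson_bot {e : R} (he : IsIdempotentElem e)
    (hJ : e ∈ Ideal.jacobson ⊥) : e = 0 :=
  (Ideal.isUnit_one_sub_of_mem_jacobson_bot hJ).mul_left_cancel <| by
    rw [mul_zero, sub_mul, one_mul, he.eq, sub_self]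

section StronglyClean

variable {S : Type*} [Ring S]

theorem IsStronglyClean.of_isUnit {a : S} (ha : IsUnit a) : IsStronglyClean a :=
  ⟨0, a, .zero, ha, (zero_add a).symm, by simp⟩

theorem IsStronglyClean.of_isUnit_sub_one {a : S} (ha : IsUnit (a - 1)) : IsStronglyClean a :=
  ⟨1, a - 1, .one, ha, (add_sub_cancel 1 a).symm, by simp⟩

theorem IsStronglyClean.map {S' F : Type*} [Ring S'] [FunLike F S S'] [RingHomClass F S S']
    (f : F) {a : S} (h : IsStronglyClean a) : IsStronglyClean (f a) := by
  obtain ⟨e, u, he, hu, rfl, hc⟩ := h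
  exact ⟨f e, f u, he.map f, hu.map f, map_add f e u, by rw [← map_mul, hc, map_mul]⟩

end StronglyClean

theorem isStronglyClean_of_mul_eq_zero {T : Type*} [CommRing T] {x l m : T}
    (h : (x - l) * (x - m) = 0) (hlm : IsUnit (l - m)) (hm : IsUnit m) (hl : IsUnit (l - 1)) :
    IsStronglyClean x := by
  obtain ⟨δ, hδ⟩ := hlm.exists_right_inv
  obtain ⟨μ, hμ⟩ := hm.exists_right_inv
  obtain ⟨κ, hκ⟩ := hl.exists_right_inv
  set e := δ * (x - m)
  have hxe : x * e = l * e := by linear_combination δ * h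
  have hxe' : x * (1 - e) = m * (1 - e) := by linear_combination (-δ) * h - (x - m) * hδ
  have he : IsIdempotentElem e := by
    show e * e = e
    linear_combination -(δ * hxe')
  refine ⟨e, x - e, he, IsUnit.of_mul_eq_one (κ * e + μ * (1 - e)) ?_, by ring, by ring⟩
  linear_combination κ * hxe + μ * hxe' + (-κ + μ) * he.eq + e * hκ + (1 - e) * hμ

theorem isStronglyClean_of_mul_eq_zero_algebraMap {S : Type*} [Ring S] [Algebra R S] {x : S}
    {l m : R} (h : (x - algebraMap R S l) * (x - algebraMap R S m) = 0)
    (hlm : IsUnit (l - m)) (hm : IsUnit m) (hl : IsUnit (l - 1)) : IsStronglyClean x := by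
  let y : Algebra.adjoin R {x} := ⟨x, Algebra.self_mem_adjoin_singleton R x⟩
  have hy : (y - algebraMap R _ l) * (y - algebraMap R _ m) = 0 := Subtype.ext h
  have := isStronglyClean_of_mul_eq_zero hy (by rw [← map_sub]; exact hlm.map _) (hm.map _)
    (by rw [← map_one (algebraMap R _), ← map_sub]; exact hl.map _)
  exact this.map (Algebra.adjoin R {x}).val

theorem Matrix.mul_self_fin_two (C : Matrix (Fin 2) (Fin 2) R) :
    C * C = C.trace • C - C.det • (1 : Matrix (Fin 2) (Fin 2) R) := by
  ext i j
  fin_cases i <;> fin_cases j <;>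
    simp [Matrix.mul_apply, Fin.sum_univ_two, det_fin_two, trace_fin_two] <;> ring

theorem Matrix.det_sub_one_fin_two (C : Matrix (Fin 2) (Fin 2) R) :
    (C - 1).det = C.det - C.trace + 1 := by
  simp only [det_fin_two, trace_fin_two, Matrix.sub_apply, one_apply_eq, one_apply_ne zero_ne_one,
    one_apply_ne one_ne_zero, sub_zero]
  ring

theorem isStronglyClean_of_trace_eq_of_det_eq {C : Matrix (Fin 2) (Fin 2) R} {l m : R}
    (ht : C.trace = l + m) (hd : C.det = l * m)
    (hlm : IsUnit (l - m)) (hm : IsUnit m) (hl : IsUnit (l - 1)) : IsStronglyClean C := by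
  refine isStronglyClean_of_mul_eq_zero_algebraMap ?_ hlm hm hl
  simp only [Algebra.algebraMap_eq_smul_one, sub_mul, mul_sub, smul_mul_assoc, mul_smul_comm,
    one_mul, mul_one, C.mul_self_fin_two, ht, hd]
  module

section Peirce

variable {S : Type*} [Ring S] [Algebra R S] {e : R}

theorem IsIdempotentElem.smul_smul_add_one_sub_smul (he : IsIdempotentElem e) (a b : S) :
    e • (e • a + (1 - e) • b) = e • a := by
  rw [smul_add, smul_smul, smul_smul, he.eq, mul_sub, mul_one, he.eq, sub_self, zero_smul,
    add_zero]

theorem IsIdempotentElem.one_sub_smul_smul_add_one_sub_smul (he : IsIdempotentElem e) (a b : S) :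
    (1 - e) • (e • a + (1 - e) • b) = (1 - e) • b := by
  simpa [add_comm] using he.one_sub.smul_smul_add_one_sub_smul b a

theorem IsIdempotentElem.smul_add_one_sub_smul_mul (he : IsIdempotentElem e) (a b c d : S) :
    (e • a + (1 - e) • b) * (e • c + (1 - e) • d) = e • (a * c) + (1 - e) • (b * d) := by
  have h : e * (1 - e) = 0 := by rw [mul_sub, mul_one, he.eq, sub_self]
  simp only [add_mul, mul_add, smul_mul_smul_comm, he.eq, he.one_sub.eq, h, mul_comm (1 - e) e,
    zero_smul, add_zero, zero_add]

theorem IsIdempotentElem.isUnit_smul_add_one_sub_smul (he : IsIdempotentElem e) {u v : S}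
    (hu : IsUnit u) (hv : IsUnit v) : IsUnit (e • u + (1 - e) • v) := by
  obtain ⟨u, rfl⟩ := hu
  obtain ⟨v, rfl⟩ := hv
  have hone : e • (1 : S) + (1 - e) • 1 = 1 := by rw [← add_smul, add_sub_cancel, one_smul]
  exact ⟨⟨_, e • ↑u⁻¹ + (1 - e) • ↑v⁻¹, by simp [he.smul_add_one_sub_smul_mul, hone],
    by simp [he.smul_add_one_sub_smul_mul, hone]⟩, rfl⟩

theorem IsStronglyClean.smul_add_one_sub_smul (he : IsIdempotentElem e) {a b : S}
    (ha : IsStronglyClean a) (hb : IsStronglyClean b) :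
    IsStronglyClean (e • a + (1 - e) • b) := by
  obtain ⟨f, u, hf, hu, rfl, hfu⟩ := ha
  obtain ⟨g, v, hg, hv, rfl, hgv⟩ := hb
  refine ⟨e • f + (1 - e) • g, e • u + (1 - e) • v, ?_, he.isUnit_smul_add_one_sub_smul hu hv,
    by module, by rw [he.smul_add_one_sub_smul_mul, he.smul_add_one_sub_smul_mul, hfu, hgv]⟩
  rw [IsIdempotentElem, he.smul_add_one_sub_smul_mul, hf.eq, hg.eq]

theorem IsStronglyClean.of_smul_add_one_sub_smul (he : IsIdempotentElem e) {a : S} (b c : S)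
    (h₁ : IsStronglyClean (e • a + (1 - e) • b)) (h₂ : IsStronglyClean (e • c + (1 - e) • a)) :
    IsStronglyClean a := by
  have := h₁.smul_add_one_sub_smul he h₂
  rwa [he.smul_smul_add_one_sub_smul, he.one_sub_smul_smul_add_one_sub_smul, ← add_smul,
    add_sub_cancel, one_smul] at this

end Peirce

theorem Matrix.det_smul_add_one_sub_smul {n : Type*} [Fintype n] [DecidableEq n] {e : R}
    (he : IsIdempotentElem e) (A B : Matrix n n R) :
    (e • A + (1 - e) • B).det = e * A.det + (1 - e) * B.det := by
  rcases isEmpty_or_nonempty n with hn | hn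
  · simp
  obtain ⟨k, hk⟩ := Nat.exists_eq_succ_of_ne_zero (Fintype.card_ne_zero (α := n))
  have key : ∀ f : R, IsIdempotentElem f → ∀ X : Matrix n n R,
      f • (e • A + (1 - e) • B) = f • X → f * (e • A + (1 - e) • B).det = f * X.det := by
    intro f hf X h
    simpa only [det_smul, hk, hf.pow_succ_eq] using congrArg det h
  calc (e • A + (1 - e) • B).det
      = e * (e • A + (1 - e) • B).det + (1 - e) * (e • A + (1 - e) • B).det := by ring
    _ = e * A.det + (1 - e) * B.det := by
      rw [key e he A (he.smul_smul_add_one_sub_smul A B),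
        key (1 - e) he.one_sub B (he.one_sub_smul_smul_add_one_sub_smul A B)]

theorem IsJCleanRing.exists_root_mem_jacobson (hR : IsJCleanRing R) {b w : R}
    (hb : b ∈ Ideal.jacobson ⊥) (hw : w ^ 2 - w + b = 0) :
    ∃ w' ∈ Ideal.jacobson ⊥, w' ^ 2 - w' + b = 0 := by
  obtain ⟨g, hg, hunit, hjac⟩ := hR w
  obtain ⟨v, hv⟩ := hunit.exists_right_inv
  refine ⟨w * (1 - g) + v * b * g, ?_, ?_⟩
  · exact Ideal.add_mem _ hjac (Ideal.mul_mem_right _ _ (Ideal.mul_mem_left _ _ hb))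
  · have hw' : w * (1 - g) + v * b * g = w + g - 2 * w * g := by
      linear_combination (1 - w) * g * hv + v * (g * hw - (1 - w) * (w - 1) * hg.eq)
    rw [hw']
    linear_combination hw + (1 - 4 * w + 4 * w ^ 2) * hg.eq

theorem Matrix.det_eq_zero_of_mul_eq_mul {n : Type*} [Fintype n] [DecidableEq n]
    {E U M : Matrix n n R} (hE : IsIdempotentElem E) (hU : IsUnit U) (h : E * U = E * M)
    (hM : M.det ∈ Ideal.jacobson ⊥) : E.det = 0 := by
  obtain ⟨ν, hν⟩ := ((isUnit_iff_isUnit_det U).mp hU).exists_right_inv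
  have hdet : E.det * U.det = E.det * M.det := by rw [← det_mul, h, det_mul]
  refine (hE.map detMonoidHom).eq_zero_of_mem_jacobson_bot ?_
  rw [show detMonoidHom E = M.det * (E.det * ν) by
    simp only [coe_detMonoidHom]; linear_combination ν * hdet - E.det * hν]
  exact Ideal.mul_mem_right _ _ hM

theorem exists_root_of_isStronglyClean_companion {a : R} (ha : a ∈ Ideal.jacobson ⊥)
    (h : IsStronglyClean !![0, -a; 1, 1]) : ∃ r : R, r ^ 2 - r + a = 0 := by
  obtain ⟨E, U, hE, hU, hsum, hcomm⟩ := h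
  set C : Matrix (Fin 2) (Fin 2) R := !![0, -a; 1, 1]
  have hU' : U = C - E := eq_sub_of_add_eq' hsum.symm
  have hdet : E.det = 0 := det_eq_zero_of_mul_eq_mul hE hU (M := C - 1)
    (by rw [hU', mul_sub, mul_sub, mul_one, hE.eq]) (by simpa [C, det_fin_two] using ha)
  have hdet' : (1 - E).det = 0 := det_eq_zero_of_mul_eq_mul hE.one_sub hU (M := C)
    (by rw [hU', mul_sub, sub_mul 1 E E, hE.eq, one_mul, sub_self, sub_zero])
    (by simpa [C, det_fin_two] using ha)
  have hEC : E * C = C * E := by rw [hsum, mul_add, add_mul, hE.eq, hcomm]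
  have h₀₀ := congr_fun₂ hEC 0 0
  have h₁₀ := congr_fun₂ hEC 1 0
  have hE₀₀ := congr_fun₂ hE.eq 0 0
  simp only [C, mul_apply, Fin.sum_univ_two, of_apply, cons_val', cons_val_zero, cons_val_one,
    cons_val_fin_one, mul_zero, mul_one, zero_add, zero_mul, neg_mul, one_mul] at h₀₀ h₁₀ hE₀₀
  simp only [det_fin_two, Matrix.sub_apply, one_apply_eq, one_apply_ne zero_ne_one,
    one_apply_ne one_ne_zero, zero_sub, mul_neg, neg_mul, neg_neg] at hdet hdet'
  have hxx : E 0 0 ^ 2 - a * E 1 0 ^ 2 = E 0 0 := by linear_combination hE₀₀ - E 1 0 * h₀₀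
  have htr : 2 * E 0 0 + E 1 0 = 1 := by linear_combination hdet - hdet' - h₁₀
  have hr : (C * E).trace = E 0 0 + E 1 0 - 2 * a * E 1 0 := by
    rw [trace_fin_two, mul_apply, mul_apply, Fin.sum_univ_two, Fin.sum_univ_two]
    simp only [C, of_apply, cons_val', cons_val_zero, cons_val_one, empty_val', cons_val_fin_one]
    linear_combination h₀₀ + h₁₀
  refine ⟨(C * E).trace, ?_⟩
  rw [hr]
  linear_combination (1 - 4 * a) * hxx + (E 1 0 - a - 3 * a * E 1 0 + 2 * a * E 0 0) * htr

section Converse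

variable (hR : IsJCleanRing R)
  (hroot : ∀ a ∈ Ideal.jacobson (⊥ : Ideal R), ∃ r : R, r ^ 2 - r + a = 0)
include hR hroot

theorem IsJCleanRing.isStronglyClean_of_det_mem_of_det_sub_one_mem
    {C : Matrix (Fin 2) (Fin 2) R} (h₀ : C.det ∈ Ideal.jacobson ⊥)
    (h₁ : (C - 1).det ∈ Ideal.jacobson ⊥) : IsStronglyClean C := by
  have ht : IsUnit C.trace := Ideal.isUnit_of_sub_one_mem_jacobson_bot _ <| by
    rw [show C.trace - 1 = C.det - (C - 1).det by rw [C.det_sub_one_fin_two]; ring]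
    exact Ideal.sub_mem _ h₀ h₁
  obtain ⟨s, hs⟩ := ht.exists_right_inv
  have hb : C.det * s ^ 2 ∈ Ideal.jacobson ⊥ := Ideal.mul_mem_right _ _ h₀
  obtain ⟨w₀, hw₀⟩ := hroot _ hb
  obtain ⟨w, hwJ, hw⟩ := hR.exists_root_mem_jacobson hb hw₀
  refine isStronglyClean_of_trace_eq_of_det_eq (l := C.trace * w) (m := C.trace * (1 - w))
    (by ring) (by linear_combination C.trace ^ 2 * hw - C.det * (C.trace * s + 1) * hs)
    ?_ (ht.mul (Ideal.isUnit_one_sub_of_mem_jacobson_bot hwJ)) ?_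
  · have := (ht.mul (Ideal.isUnit_one_sub_of_mem_jacobson_bot
      (Ideal.mul_mem_left _ 2 hwJ))).neg
    convert this using 1
    ring
  · have := (Ideal.isUnit_one_sub_of_mem_jacobson_bot (Ideal.mul_mem_left _ C.trace hwJ)).neg
    convert this using 1
    ring

theorem IsJCleanRing.isStronglyClean_of_det_mem {C : Matrix (Fin 2) (Fin 2) R}
    (h₀ : C.det ∈ Ideal.jacobson ⊥) : IsStronglyClean C := by
  obtain ⟨e, he, hunit, hjac⟩ := hR (C - 1).det
  -- the filler `!![1, 0; 0, 0]` on the `e`-part and its translate by `-1` are both singular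
  refine IsStronglyClean.of_smul_add_one_sub_smul he 0 !![1, 0; 0, 0] ?_ ?_
  · refine .of_isUnit_sub_one ?_
    rw [isUnit_iff_isUnit_det,
      show e • C + (1 - e) • (0 : Matrix (Fin 2) (Fin 2) R) - 1 = e • (C - 1) + (1 - e) • (-1) by
        module, det_smul_add_one_sub_smul he]
    simpa [det_neg, mul_comm] using hunit
  · refine hR.isStronglyClean_of_det_mem_of_det_sub_one_mem hroot ?_ ?_
    · rw [det_smul_add_one_sub_smul he]
      simpa [det_fin_two_of, mul_comm] using Ideal.mul_mem_left _ (1 - e) h₀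
    · rw [show e • !![1, 0; 0, 0] + (1 - e) • C - 1 = e • (!![1, 0; 0, 0] - 1) + (1 - e) • (C - 1)
        by module, det_smul_add_one_sub_smul he]
      simpa [det_fin_two, mul_comm] using hjac

theorem IsJCleanRing.isStronglyClean_fin_two (C : Matrix (Fin 2) (Fin 2) R) :
    IsStronglyClean C := by
  obtain ⟨e, he, hunit, hjac⟩ := hR C.det
  refine IsStronglyClean.of_smul_add_one_sub_smul he 1 0 ?_ ?_
  · refine .of_isUnit ?_
    rw [isUnit_iff_isUnit_det, det_smul_add_one_sub_smul he]
    simpa [mul_comm] using hunit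
  · refine hR.isStronglyClean_of_det_mem hroot ?_
    rw [det_smul_add_one_sub_smul he]
    simpa [mul_comm] using hjac

end Converse

end

/-- For a commutative J-clean ring `R`, the matrix ring `M₂(R)` is strongly clean iff for
every `a ∈ J(R)` the polynomial `t² - t + a` has a root in `R`. -/
theorem matrix_two_stronglyClean_iff_of_jClean {R : Type*} [CommRing R]
    (hR : IsJCleanRing R) :
    (∀ A : Matrix (Fin 2) (Fin 2) R, IsStronglyClean A) ↔
      ∀ a ∈ Ideal.jacobson (⊥ : Ideal R), ∃ r : R, r ^ 2 - r + a = 0 :=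
  ⟨fun h _ ha => exists_root_of_isStronglyClean_companion ha (h _),
    fun hroot => hR.isStronglyClean_fin_two hroot⟩
end
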